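/- arXiv:math/0503708 — 2 statements merged into one kernel-verified Lean document; each statement's English description precedes it below -/
import Mathlib

section
/- Let P, Q, L be real n×n matrices with P = Pᵀ, Q = Qᵀ and L invertible, let S_W = [[L⁻¹Q, L⁻¹],[P·L⁻¹·Q − Lᵀ, P·L⁻¹]], and assume W_xx = P + Q − L − Lᵀ is invertible. Then the sign of det(S_W − I) equals (−1)^(n + Inert W_xx) times the sign of det L, where Inert W_xx is the number of negative eigenvalues of the symmetric matrix W_xx counted with multiplicity. -/
open Matrix

/-! `S_W - I = [[I, 0], [P - L, I]] * [[L⁻¹Q - I, L⁻¹], [W_xx, 0]]`, and a block matrix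
`[[A, B], [C, 0]]` with square blocks has determinant `(-1)ⁿ det B det C`; hence
`det (S_W - I) = (-1)ⁿ det W_xx / det L`. Finally `det W_xx` is the product of the eigenvalues
of `W_xx`, none of which vanishes, so its sign is `(-1) ^ Inert W_xx`. -/

/-- The free symplectic matrix `S_W = [[L⁻¹Q, L⁻¹],[P L⁻¹ Q - Lᵀ, P L⁻¹]]`. -/
noncomputable def freeSymplectic {n : ℕ} (P L Q : Matrix (Fin n) (Fin n) ℝ) :
    Matrix (Fin n ⊕ Fin n) (Fin n ⊕ Fin n) ℝ :=
  Matrix.fromBlocks (L⁻¹ * Q) L⁻¹ (P * L⁻¹ * Q - Lᵀ) (P * L⁻¹)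

namespace Real

theorem sign_eq_coe_sign (r : ℝ) : Real.sign r = (SignType.sign r : ℝ) := by
  rcases lt_trichotomy r 0 with hr | rfl | hr
  · simp [sign_of_neg hr, _root_.sign_neg hr]
  · simp
  · simp [sign_of_pos hr, _root_.sign_pos hr]

theorem sign_mul (x y : ℝ) : Real.sign (x * y) = Real.sign x * Real.sign y := by
  simp only [sign_eq_coe_sign, _root_.sign_mul, SignType.coe_mul]

theorem sign_pow (x : ℝ) (k : ℕ) : Real.sign (x ^ k) = Real.sign x ^ k := by
  simp only [sign_eq_coe_sign, _root_.sign_pow, SignType.coe_pow]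

theorem sign_prod {ι : Type*} (s : Finset ι) (f : ι → ℝ) :
    Real.sign (∏ i ∈ s, f i) = ∏ i ∈ s, Real.sign (f i) :=
  map_prod (⟨⟨Real.sign, sign_one⟩, sign_mul⟩ : ℝ →* ℝ) f s

theorem sign_prod_of_ne_zero {ι : Type*} (s : Finset ι) (f : ι → ℝ) (hf : ∀ i ∈ s, f i ≠ 0) :
    Real.sign (∏ i ∈ s, f i) = (-1) ^ (s.filter fun i => f i < 0).card := by
  have hsign : ∀ i ∈ s, Real.sign (f i) = if f i < 0 then -1 else 1 := by
    intro i hi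
    rcases (hf i hi).lt_or_gt with hneg | hpos
    · simp [hneg, sign_of_neg]
    · simp [hpos.not_gt, sign_of_pos hpos]
  rw [sign_prod, Finset.prod_congr rfl hsign, Finset.prod_ite, Finset.prod_const,
    Finset.prod_const_one, mul_one]

end Real

namespace Matrix

theorem IsHermitian.sign_det {ι : Type*} [Fintype ι] [DecidableEq ι]
    {A : Matrix ι ι ℝ} (hA : A.IsHermitian) (hdet : A.det ≠ 0) :
    Real.sign A.det = (-1) ^ (Finset.univ.filter fun i => hA.eigenvalues i < 0).card := by
  have hprod : A.det = ∏ i, hA.eigenvalues i := by simpa using hA.det_eq_prod_eigenvalues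
  rw [hprod] at hdet ⊢
  exact Real.sign_prod_of_ne_zero _ _ fun i _ hi =>
    hdet (Finset.prod_eq_zero (Finset.mem_univ i) hi)

variable {m R : Type*} [Fintype m] [DecidableEq m] [CommRing R]

theorem det_fromBlocks_zero_one_one_zero :
    (fromBlocks 0 1 1 0 : Matrix (m ⊕ m) (m ⊕ m) R).det = (-1) ^ Fintype.card m := by
  have h : (fromBlocks 0 1 1 0 : Matrix (m ⊕ m) (m ⊕ m) R) * fromBlocks 1 1 0 1
      = fromBlocks 0 1 1 1 := by
    simp [fromBlocks_multiply]
  have hdet := congrArg det h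
  rwa [det_mul, det_fromBlocks_zero₂₁, det_one, mul_one, mul_one, det_fromBlocks_one₂₂,
    Matrix.mul_one, zero_sub, det_neg, det_one, mul_one] at hdet

theorem det_fromBlocks_zero₂₂ (A B C : Matrix m m R) :
    (fromBlocks A B C 0).det = (-1) ^ Fintype.card m * B.det * C.det := by
  have h : fromBlocks A B C 0 = fromBlocks B A 0 C * fromBlocks 0 1 1 0 := by
    simp [fromBlocks_multiply]
  rw [h, det_mul, det_fromBlocks_zero₂₁, det_fromBlocks_zero_one_one_zero]
  ring

end Matrix

theorem freeSymplectic_sub_one_eq_mul {n : ℕ} (P L Q : Matrix (Fin n) (Fin n) ℝ)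
    (hL : L.det ≠ 0) :
    freeSymplectic P L Q - 1
      = fromBlocks 1 0 (P - L) 1 * fromBlocks (L⁻¹ * Q - 1) L⁻¹ (P + Q - L - Lᵀ) 0 := by
  have hLinv : L * L⁻¹ = 1 := mul_nonsing_inv L (isUnit_iff_ne_zero.mpr hL)
  rw [freeSymplectic, ← fromBlocks_one, sub_eq_add_neg, fromBlocks_neg, fromBlocks_add,
    fromBlocks_multiply, fromBlocks_inj]
  refine ⟨?_, ?_, ?_, ?_⟩ <;>
    simp only [Matrix.sub_mul, Matrix.mul_sub, Matrix.one_mul, Matrix.zero_mul, Matrix.mul_one,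
      Matrix.mul_zero, neg_zero, add_zero, ← Matrix.mul_assoc, hLinv] <;>
    abel

theorem det_freeSymplectic_sub_one {n : ℕ} (P L Q : Matrix (Fin n) (Fin n) ℝ)
    (hL : L.det ≠ 0) :
    (freeSymplectic P L Q - 1).det = (-1) ^ n * L.det⁻¹ * (P + Q - L - Lᵀ).det := by
  rw [freeSymplectic_sub_one_eq_mul P L Q hL, det_mul, det_fromBlocks_zero₁₂, det_one,
    one_mul, one_mul, det_fromBlocks_zero₂₂, det_nonsing_inv, Ring.inverse_eq_inv',
    Fintype.card_fin]

theorem sign_det_SW_sub_one_general {n : ℕ} (P L Q : Matrix (Fin n) (Fin n) ℝ)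
    (hL : L.det ≠ 0)
    (hWsym : (P + Q - L - Lᵀ).IsHermitian) (hW : (P + Q - L - Lᵀ).det ≠ 0) :
    Real.sign (freeSymplectic P L Q - 1).det
      = (-1 : ℝ) ^ (n + (Finset.univ.filter fun i => hWsym.eigenvalues i < 0).card)
          * Real.sign L.det := by
  rw [det_freeSymplectic_sub_one P L Q hL, Real.sign_mul, Real.sign_mul, Real.sign_pow,
    Real.sign_neg, Real.sign_one, Real.sign_inv, hWsym.sign_det hW, pow_add]
  ring

/-- with `W_xx = P + Q - L - Lᵀ` invertible, the sign of `det (S_W - I)` equals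
`(-1)^(n + Inert W_xx)` times the sign of `det L`, where `Inert W_xx` is the number of
negative eigenvalues of the symmetric matrix `W_xx`, counted with multiplicity. -/
theorem sign_det_SW_sub_one {n : ℕ} (P L Q : Matrix (Fin n) (Fin n) ℝ)
    (hP : Pᵀ = P) (hQ : Qᵀ = Q) (hL : L.det ≠ 0)
    (hWsym : (P + Q - L - Lᵀ).IsHermitian) (hW : (P + Q - L - Lᵀ).det ≠ 0) :
    Real.sign (freeSymplectic P L Q - 1).det
      = (-1 : ℝ) ^ (n + (Finset.univ.filter fun i => hWsym.eigenvalues i < 0).card)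
          * Real.sign L.det :=
  sign_det_SW_sub_one_general P L Q hL hWsym hW
end

section
/- Let S and S' be real 2n×2n symplectic matrices with det(S − I) ≠ 0, det(S' − I) ≠ 0 and det(S·S' − I) ≠ 0, and set M = M_S, M' = M_{S'} (so that M + M' is invertible). Then M − (M + ½J)·(M + M')⁻¹·(M − ½J) = ½·J·(S·S' + I)·(S·S' − I)⁻¹ = M_{SS'}. -/
/-!
Since `(S + 1)(S - 1)⁻¹ = 1 + 2 (S - 1)⁻¹`, we have `M_S = ½ J + J (S - 1)⁻¹`, so the `½ J` terms
cancel out of the identity. Moreover `M_S + M_{S'} = J (S - 1)⁻¹ (S S' - 1) (S' - 1)⁻¹`, and after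
cancelling `J` the identity becomes `(1 + (S - 1)⁻¹)(S' - 1)(S S' - 1)⁻¹ = (S - 1)⁻¹ - (S S' - 1)⁻¹`,
which follows from `1 + (S - 1)⁻¹ = (S - 1)⁻¹ S` and `S (S' - 1) = (S S' - 1) - (S - 1)`.
-/

open Matrix

/-- The standard symplectic matrix `J = [[0, I],[-I, 0]]`. -/
noncomputable def sympJ (n : ℕ) : Matrix (Fin n ⊕ Fin n) (Fin n ⊕ Fin n) ℝ :=
  Matrix.fromBlocks 0 1 (-1) 0

/-- `M_S = ½ J (S + I) (S - I)⁻¹`. -/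
noncomputable def MS {n : ℕ} (S : Matrix (Fin n ⊕ Fin n) (Fin n ⊕ Fin n) ℝ) :
    Matrix (Fin n ⊕ Fin n) (Fin n ⊕ Fin n) ℝ :=
  (1 / 2 : ℝ) • (sympJ n * (S + 1) * (S - 1)⁻¹)

namespace Matrix

variable {m K : Type*} [Fintype m] [DecidableEq m] [Field K]

noncomputable def halfCayley (J S : Matrix m m K) : Matrix m m K :=
  (1 / 2 : K) • (J * (S + 1) * (S - 1)⁻¹)

theorem halfCayley_eq_half_smul_add [NeZero (2 : K)] (J : Matrix m m K) {S : Matrix m m K}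
    (hS : IsUnit (S - 1).det) : halfCayley J S = (1 / 2 : K) • J + J * (S - 1)⁻¹ := by
  have hsplit : J * (S + 1) * (S - 1)⁻¹ = J + (2 : K) • (J * (S - 1)⁻¹) := by
    rw [show S + 1 = (S - 1) + (2 : K) • 1 by rw [two_smul]; abel, mul_add, add_mul,
      mul_nonsing_inv_cancel_right _ _ hS, mul_smul_comm, mul_one, smul_mul_assoc]
  rw [halfCayley, hsplit, smul_add, smul_smul, one_div, inv_mul_cancel₀ two_ne_zero, one_smul]

theorem inv_sub_one_add_inv_sub_one_add_one {S T : Matrix m m K}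
    (hS : IsUnit (S - 1).det) (hT : IsUnit (T - 1).det) :
    (S - 1)⁻¹ + (T - 1)⁻¹ + 1 = (S - 1)⁻¹ * (S * T - 1) * (T - 1)⁻¹ := by
  rw [show S * T - 1 = (S - 1) * (T - 1) + (S - 1) + (T - 1) by noncomm_ring]
  simp only [mul_add, add_mul, ← mul_assoc, nonsing_inv_mul _ hS, one_mul,
    mul_nonsing_inv_cancel_right _ _ hT, mul_nonsing_inv _ hT]
  abel

theorem inv_sub_one_mul_self {S : Matrix m m K} (hS : IsUnit (S - 1).det) :
    (S - 1)⁻¹ * S = 1 + (S - 1)⁻¹ :=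
  calc (S - 1)⁻¹ * S = (S - 1)⁻¹ * ((S - 1) + 1) := by rw [sub_add_cancel]
    _ = 1 + (S - 1)⁻¹ := by rw [mul_add, nonsing_inv_mul _ hS, mul_one]

theorem one_add_inv_sub_one_mul_sub_one_mul_inv {S T : Matrix m m K}
    (hS : IsUnit (S - 1).det) (hST : IsUnit (S * T - 1).det) :
    (1 + (S - 1)⁻¹) * (T - 1) * (S * T - 1)⁻¹ = (S - 1)⁻¹ - (S * T - 1)⁻¹ :=
  calc (1 + (S - 1)⁻¹) * (T - 1) * (S * T - 1)⁻¹
      = (S - 1)⁻¹ * (S * (T - 1)) * (S * T - 1)⁻¹ := by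
        rw [← inv_sub_one_mul_self hS, mul_assoc (S - 1)⁻¹]
    _ = (S - 1)⁻¹ * ((S * T - 1) - (S - 1)) * (S * T - 1)⁻¹ := by congr 2; noncomm_ring
    _ = (S - 1)⁻¹ - (S * T - 1)⁻¹ := by
        rw [mul_sub, sub_mul, mul_nonsing_inv_cancel_right _ _ hST, nonsing_inv_mul _ hS,
          one_mul]

theorem halfCayley_mul [NeZero (2 : K)] {J S T : Matrix m m K} (hJ : IsUnit J.det)
    (hS : IsUnit (S - 1).det) (hT : IsUnit (T - 1).det) (hST : IsUnit (S * T - 1).det) :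
    halfCayley J S - (halfCayley J S + (1 / 2 : K) • J) * (halfCayley J S + halfCayley J T)⁻¹
        * (halfCayley J S - (1 / 2 : K) • J) = halfCayley J (S * T) := by
  rw [halfCayley_eq_half_smul_add J hS, halfCayley_eq_half_smul_add J hT,
    halfCayley_eq_half_smul_add J hST]
  have hplus : (1 / 2 : K) • J + J * (S - 1)⁻¹ + (1 / 2 : K) • J = J * (1 + (S - 1)⁻¹) := by
    rw [add_right_comm, ← add_smul, add_halves, one_smul, mul_add, mul_one]
  have hsum : (1 / 2 : K) • J + J * (S - 1)⁻¹ + ((1 / 2 : K) • J + J * (T - 1)⁻¹)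
      = J * ((S - 1)⁻¹ * (S * T - 1) * (T - 1)⁻¹) := by
    rw [← inv_sub_one_add_inv_sub_one_add_one hS hT, add_add_add_comm, ← add_smul, add_halves,
      one_smul, mul_add, mul_add, mul_one, add_comm J]
  have hinv : (J * ((S - 1)⁻¹ * (S * T - 1) * (T - 1)⁻¹))⁻¹
      = (T - 1) * (S * T - 1)⁻¹ * (S - 1) * J⁻¹ := by
    simp only [Matrix.mul_inv_rev, nonsing_inv_nonsing_inv _ hS, nonsing_inv_nonsing_inv _ hT,
      mul_assoc]
  have hprod : J * (1 + (S - 1)⁻¹) * ((T - 1) * (S * T - 1)⁻¹ * (S - 1) * J⁻¹) * (J * (S - 1)⁻¹)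
      = J * ((1 + (S - 1)⁻¹) * (T - 1) * (S * T - 1)⁻¹) := by
    simp only [mul_assoc, nonsing_inv_mul_cancel_left _ _ hJ, mul_nonsing_inv _ hS, mul_one]
  rw [hplus, hsum, hinv, add_sub_cancel_left, hprod,
    one_add_inv_sub_one_mul_sub_one_mul_inv hS hST, mul_sub]
  abel

end Matrix

theorem sympJ_mul_self (n : ℕ) : sympJ n * sympJ n = -1 := by
  rw [sympJ, fromBlocks_multiply, ← fromBlocks_one, fromBlocks_neg]
  simp

theorem isUnit_det_sympJ (n : ℕ) : IsUnit (sympJ n).det :=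
  isUnit_det_of_right_inverse (B := -sympJ n) (by rw [mul_neg, sympJ_mul_self, neg_neg])

theorem MS_composition_general {n : ℕ} (S S' : Matrix (Fin n ⊕ Fin n) (Fin n ⊕ Fin n) ℝ)
    (hdet : (S - 1).det ≠ 0) (hdet' : (S' - 1).det ≠ 0)
    (hdet'' : (S * S' - 1).det ≠ 0) :
    MS S - (MS S + (1 / 2 : ℝ) • sympJ n) * (MS S + MS S')⁻¹
          * (MS S - (1 / 2 : ℝ) • sympJ n)
      = MS (S * S') :=
  halfCayley_mul (isUnit_det_sympJ n) hdet.isUnit hdet'.isUnit hdet''.isUnit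

/-- for symplectic `S, S'` with `det (S - I) ≠ 0`, `det (S' - I) ≠ 0` and
`det (S S' - I) ≠ 0`, putting `M = M_S`, `M' = M_{S'}`, one has
`M - (M + ½J)(M + M')⁻¹(M - ½J) = ½ J (S S' + I)(S S' - I)⁻¹ = M_{S S'}`. -/
theorem MS_composition {n : ℕ} (S S' : Matrix (Fin n ⊕ Fin n) (Fin n ⊕ Fin n) ℝ)
    (hS : Sᵀ * sympJ n * S = sympJ n) (hS' : S'ᵀ * sympJ n * S' = sympJ n)
    (hdet : (S - 1).det ≠ 0) (hdet' : (S' - 1).det ≠ 0)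
    (hdet'' : (S * S' - 1).det ≠ 0) :
    MS S - (MS S + (1 / 2 : ℝ) • sympJ n) * (MS S + MS S')⁻¹
          * (MS S - (1 / 2 : ℝ) • sympJ n)
      = MS (S * S') :=
  MS_composition_general S S' hdet hdet' hdet''
end
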